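/- arXiv:2409.06553 — 3 statements merged into one kernel-verified Lean document; each statement's English description precedes it below -/
import Mathlib

section
/- Let \(C\) be a cut of the quiver \(\hat{Q}\), i.e. a set of arrows such that every elementary cycle (a cycle of length \(n+1\) whose arrows have \(n+1\) pairwise distinct types) contains exactly one arrow of \(C\). Assign to each arrow \(a\) the increment \(h_C(a) = 1\) if \(a \notin C\) and \(h_C(a) = -n\) if \(a \in C\), and extend additively to paths. Then every cycle \(c\) in \(\hat{Q}\) has total height increment \(h_C(c) = 0\). -/
open scoped Classical

noncomputable section

/-- Vertices of the universal cover quiver: the lattice `L₀ = ℤⁿ`. -/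
abbrev V (n : ℕ) := Fin n → ℤ

/-- The vectors `α₁, …, αₙ` (standard basis) and `α_{n+1} = -∑ αᵢ`. -/
def alphav (n : ℕ) (i : Fin (n + 1)) : V n :=
  if h : (i : ℕ) < n then Pi.single ⟨i, h⟩ 1 else fun _ => -1

/-- An arrow of `Q̂` is a pair (source, type): the arrow `x → x + αᵢ`. -/
abbrev Arrow (n : ℕ) := V n × Fin (n + 1)

/-- The list of arrows of the path starting at `x` with list of types `l`. -/
def pathArrows (n : ℕ) : V n → List (Fin (n + 1)) → List (Arrow n)
  | _, [] => []
  | x, i :: l => (x, i) :: pathArrows n (x + alphav n i) l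

/-- An elementary cycle: length `n+1`, pairwise distinct types, closed. -/
def IsElemCycle (n : ℕ) (l : List (Fin (n + 1))) : Prop :=
  l.length = n + 1 ∧ l.Nodup ∧ (l.map (alphav n)).sum = 0

/-- A cut: every elementary cycle passes through exactly one arrow of `C`. -/
def IsCut (n : ℕ) (C : Set (Arrow n)) : Prop :=
  ∀ (x : V n) (l : List (Fin (n + 1))), IsElemCycle n l →
    ∃! a : Arrow n, a ∈ pathArrows n x l ∧ a ∈ C

/-- Height increment of a single arrow. -/
def hInc (n : ℕ) (C : Set (Arrow n)) (a : Arrow n) : ℤ :=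
  if a ∈ C then -(n : ℤ) else 1

/-- Height increment along the path from `x` with types `l`. -/
def pathH (n : ℕ) (C : Set (Arrow n)) (x : V n) (l : List (Fin (n + 1))) : ℤ :=
  ((pathArrows n x l).map (hInc n C)).sum

/-- A height function. -/
def IsHeight (n : ℕ) (h : V n → ℤ) : Prop :=
  h 0 = 0 ∧ ∀ (x : V n) (i : Fin (n + 1)),
    h (x + alphav n i) = h x + 1 ∨ h (x + alphav n i) = h x - n

/-- The cut associated to a height function. -/
def cutOf (n : ℕ) (h : V n → ℤ) : Set (Arrow n) :=
  {a | h (a.1 + alphav n a.2) = h a.1 - n}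

/-- `L₁`-periodicity of a set of arrows. -/
def IsPeriodic (n : ℕ) (L1 : AddSubgroup (V n)) (C : Set (Arrow n)) : Prop :=
  ∀ a : Arrow n, ∀ y ∈ L1, (a ∈ C ↔ (a.1 + y, a.2) ∈ C)

/-- The type of a periodic cut: the number of `L₁`-orbits of cut arrows of type `i`. -/
def typeCount (n : ℕ) (L1 : AddSubgroup (V n)) (C : Set (Arrow n)) (i : Fin (n + 1)) : ℕ :=
  Nat.card ((QuotientAddGroup.mk (s := L1)) '' {x : V n | (x, i) ∈ C})

end
section Aux

variable (n : ℕ) (C : Set (Arrow n))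

lemma pathH_nil (x : V n) : pathH n C x [] = 0 := rfl

lemma pathH_cons (x : V n) (i : Fin (n+1)) (l : List (Fin (n+1))) :
    pathH n C x (i :: l) = hInc n C (x, i) + pathH n C (x + alphav n i) l := by
  simp [pathH, pathArrows]

lemma pathArrows_append (x : V n) (l l' : List (Fin (n+1))) :
    pathArrows n x (l ++ l') = pathArrows n x l ++ pathArrows n (x + (l.map (alphav n)).sum) l' := by
  induction l generalizing x with
  | nil => simp [pathArrows]
  | cons i l ih =>
      simp only [List.cons_append, pathArrows, List.map_cons, List.sum_cons, ← add_assoc]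
      exact congrArg _ (ih _)

lemma pathH_append (x : V n) (l l' : List (Fin (n+1))) :
    pathH n C x (l ++ l') = pathH n C x l + pathH n C (x + (l.map (alphav n)).sum) l' := by
  simp [pathH, pathArrows_append]

lemma pathArrows_length (x : V n) (l : List (Fin (n+1))) :
    (pathArrows n x l).length = l.length := by
  induction l generalizing x with
  | nil => rfl
  | cons i l ih => simp [pathArrows, ih]

lemma pathArrows_map_snd (x : V n) (l : List (Fin (n+1))) :
    (pathArrows n x l).map Prod.snd = l := by
  induction l generalizing x with
  | nil => rfl
  | cons i l ih => simp [pathArrows, ih]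

lemma pathArrows_nodup (x : V n) (l : List (Fin (n+1))) (hl : l.Nodup) :
    (pathArrows n x l).Nodup := by
  have := hl
  rw [← pathArrows_map_snd n x l] at this
  exact this.of_map _

lemma sum_hInc_none (L : List (Arrow n)) (hnone : ∀ c ∈ L, c ∉ C) :
    (L.map (hInc n C)).sum = (L.length : ℤ) := by
  induction L with
  | nil => simp
  | cons d L ih =>
      simp only [List.map_cons, List.sum_cons, List.length_cons]
      rw [hInc, if_neg (hnone d List.mem_cons_self),
        ih (fun c hc => hnone c (List.mem_cons_of_mem _ hc))]
      push_cast; ring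

/-- sum of hInc over a nodup list with exactly one element in C -/
lemma sum_hInc (L : List (Arrow n)) (hL : L.Nodup) (a : Arrow n)
    (ha : a ∈ L ∧ a ∈ C) (hu : ∀ b : Arrow n, b ∈ L ∧ b ∈ C → b = a) :
    (L.map (hInc n C)).sum = (L.length : ℤ) - (n + 1) := by
  classical
  induction L with
  | nil => exact absurd ha.1 List.not_mem_nil
  | cons b L ih =>
      rcases List.nodup_cons.mp hL with ⟨hbL, hLnd⟩
      by_cases hba : b = a
      · subst hba
        have hnone : ∀ c ∈ L, c ∉ C := by
          intro c hc hcC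
          have := hu c ⟨List.mem_cons_of_mem _ hc, hcC⟩
          exact hbL (this ▸ hc)
        simp only [List.map_cons, List.sum_cons, List.length_cons,
          sum_hInc_none n C L hnone]
        rw [hInc, if_pos ha.2]
        push_cast; ring
      · have hbC : b ∉ C := fun hbC => hba (hu b ⟨List.mem_cons_self, hbC⟩)
        have haL : a ∈ L := by
          rcases List.mem_cons.mp ha.1 with h | h
          · exact absurd h.symm hba
          · exact h
        have := ih hLnd ⟨haL, ha.2⟩ (fun c hc => hu c ⟨List.mem_cons_of_mem _ hc.1, hc.2⟩)
        simp only [List.map_cons, List.sum_cons, List.length_cons, this]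
        rw [hInc, if_neg hbC]
        push_cast; ring

lemma pathH_elem (hC : IsCut n C) (x : V n) (l : List (Fin (n+1)))
    (hl : IsElemCycle n l) : pathH n C x l = 0 := by
  obtain ⟨a, ha, hu⟩ := hC x l hl
  have hnd := pathArrows_nodup n x l hl.2.1
  have := sum_hInc n C (pathArrows n x l) hnd a ha hu
  rw [pathH, this, pathArrows_length, hl.1]
  push_cast; ring

lemma sum_alphav_finRange :
    ((List.finRange (n+1)).map (alphav n)).sum = 0 := by
  classical
  rw [← Fin.sum_univ_def]
  funext j
  have : (∑ i : Fin (n+1), alphav n i) j = ∑ i : Fin (n+1), alphav n i j := by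
    simp [Finset.sum_apply]
  rw [this]
  rw [Fin.sum_univ_castSucc]
  have hlast : alphav n (Fin.last n) j = -1 := by
    simp [alphav]
  have hcs : ∀ i : Fin n, alphav n (Fin.castSucc i) j = if j = i then 1 else 0 := by
    intro i
    have h : ((Fin.castSucc i : Fin (n+1)) : ℕ) < n := i.isLt
    rw [alphav, dif_pos h]
    have : (⟨((Fin.castSucc i : Fin (n+1)) : ℕ), h⟩ : Fin n) = i := by
      apply Fin.ext; simp
    rw [this, Pi.single_apply]
  simp only [hcs, hlast, Finset.sum_ite_eq, Finset.mem_univ, if_pos]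
  simp

lemma isElemCycle_of_perm (l : List (Fin (n+1)))
    (hp : l.Perm (List.finRange (n+1))) : IsElemCycle n l := by
  refine ⟨?_, ?_, ?_⟩
  · rw [hp.length_eq, List.length_finRange]
  · exact (List.nodup_finRange _).perm hp.symm
  · rw [(hp.map (alphav n)).sum_eq, sum_alphav_finRange]

/-- the square/swap relation -/
lemma hInc_swap (hC : IsCut n C) (x : V n) (a b : Fin (n+1)) :
    hInc n C (x, a) + hInc n C (x + alphav n a, b)
      = hInc n C (x, b) + hInc n C (x + alphav n b, a) := by
  classical
  by_cases hab : a = b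
  · subst hab; rfl
  · set w := ((List.finRange (n+1)).erase a).erase b with hw
    have ha : a ∈ List.finRange (n+1) := List.mem_finRange a
    have hb : b ∈ (List.finRange (n+1)).erase a :=
      (List.mem_erase_of_ne (Ne.symm hab)).mpr (List.mem_finRange b)
    have p1 : (a :: b :: w).Perm (List.finRange (n+1)) :=
      ((List.perm_cons_erase hb).symm.cons a).trans (List.perm_cons_erase ha).symm
    have p2 : (b :: a :: w).Perm (List.finRange (n+1)) :=
      (List.Perm.swap a b w).trans p1
    have e1 := pathH_elem n C hC x _ (isElemCycle_of_perm n _ p1)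
    have e2 := pathH_elem n C hC x _ (isElemCycle_of_perm n _ p2)
    rw [pathH_cons, pathH_cons] at e1 e2
    have hcomm : x + alphav n a + alphav n b = x + alphav n b + alphav n a := by
      rw [add_assoc, add_assoc, add_comm (alphav n a)]
    rw [hcomm] at e1
    linarith [e1, e2]

lemma pathH_perm (hC : IsCut n C) (x : V n) (l l' : List (Fin (n+1)))
    (hp : l.Perm l') : pathH n C x l = pathH n C x l' := by
  induction hp generalizing x with
  | nil => rfl
  | cons i _ ih => rw [pathH_cons, pathH_cons, ih]
  | swap a b l =>
      rw [pathH_cons, pathH_cons, pathH_cons, pathH_cons]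
      have hcomm : x + alphav n b + alphav n a = x + alphav n a + alphav n b := by
        rw [add_assoc, add_assoc, add_comm (alphav n b)]
      rw [hcomm]
      have := hInc_swap n C hC x b a
      linarith
  | trans _ _ ih1 ih2 => rw [ih1, ih2]

lemma count_sub_count (l : List (Fin (n+1))) (j : Fin n) :
    ((l.map (alphav n)).sum) j = (l.count (Fin.castSucc j) : ℤ) - l.count (Fin.last n) := by
  classical
  induction l with
  | nil => simp
  | cons i l ih =>
      simp only [List.map_cons, List.sum_cons, Pi.add_apply, ih, List.count_cons]
      by_cases hi : (i : ℕ) < n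
      · have hine : i ≠ Fin.last n := by
          intro h; rw [h] at hi; simp [Fin.last] at hi
        rw [alphav, dif_pos hi, Pi.single_apply]
        by_cases hj : i = Fin.castSucc j
        · have : j = (⟨i, hi⟩ : Fin n) := by
            apply Fin.ext; simp [hj]
          simp only [beq_iff_eq, if_pos this, if_pos hj, if_neg hine]
          push_cast; ring
        · have : ¬ j = (⟨i, hi⟩ : Fin n) := by
            intro h
            apply hj
            apply Fin.ext; simp [h]
          simp only [beq_iff_eq, if_neg this, if_neg hj, if_neg hine]
          push_cast; ring
      · have hi' : i = Fin.last n := by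
          apply Fin.ext
          simp only [Fin.val_last]
          omega
        have hine : i ≠ Fin.castSucc j := by
          intro h; rw [h] at hi; exact hi j.isLt
        rw [alphav, dif_neg hi]
        simp only [beq_iff_eq, if_pos hi', if_neg hine, Pi.neg_apply, Pi.one_apply]
        push_cast; ring

end Aux

/-- every cycle has total height increment `0`. -/
theorem stmt_1 (n : ℕ) (hn : 1 ≤ n) (C : Set (Arrow n)) (hC : IsCut n C)
    (x : V n) (l : List (Fin (n + 1))) (hcycle : (l.map (alphav n)).sum = 0) :
    pathH n C x l = 0 := by
  classical
  set k := l.count (Fin.last n) with hk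
  have hcount : ∀ i : Fin (n+1), l.count i = k := by
    intro i
    by_cases hi : (i : ℕ) < n
    · have h := count_sub_count n l ⟨i, hi⟩
      rw [hcycle] at h
      have hcs : Fin.castSucc (⟨i, hi⟩ : Fin n) = i := by
        apply Fin.ext; simp
      rw [hcs] at h
      have : (l.count i : ℤ) = l.count (Fin.last n) := by
        simp only [Pi.zero_apply] at h
        linarith
      exact_mod_cast this
    · have : i = Fin.last n := by
        apply Fin.ext; simp only [Fin.val_last]; omega
      rw [this]
  have hperm : l.Perm (List.replicate k (List.finRange (n+1))).flatten := by
    rw [List.perm_iff_count]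
    intro i
    rw [hcount i]
    have : ∀ m : ℕ, ((List.replicate m (List.finRange (n+1))).flatten).count i
        = m * (List.finRange (n+1)).count i := by
      intro m
      induction m with
      | zero => simp
      | succ m ih => simp [List.replicate_succ, List.count_append, ih]; ring
    rw [this k, List.count_eq_one_of_mem (List.nodup_finRange _) (List.mem_finRange i)]
    ring
  rw [pathH_perm n C hC x l _ hperm]
  clear hperm hcount hk hcycle
  induction k with
  | zero => simp [pathH, pathArrows]
  | succ m ih =>
      rw [List.replicate_succ, List.flatten_cons, pathH_append, sum_alphav_finRange,
        pathH_elem n C hC x _ (isElemCycle_of_perm n _ (List.Perm.refl _))]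
      simpa using ih
end

section
/- Let \(L_1 \le L_0 = \mathbb{Z}^n\) be a finite-index sublattice, \(m = [L_0 : L_1]\), and let \(C\) be an \(L_1\)-periodic cut of type \(\gamma = (\gamma_1, \ldots, \gamma_{n+1})\). Then for every \(y \in L_1\), the associated height function satisfies \(h_C(y) = \sum_{i=1}^{n} y_i \left(1 - \frac{n+1}{m}\gamma_i\right)\). -/
open scoped Classical

section MyAux

lemma my_alphav_castSucc (n : ℕ) (i : Fin n) :
    alphav n i.castSucc = Pi.single i 1 := by
  have hlt : ((i.castSucc : Fin (n+1)) : ℕ) < n := by simpa using i.isLt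
  rw [alphav, dif_pos hlt]
  congr 1

lemma my_coord_lin (n : ℕ) (g : V n → ℤ) (c : Fin n → ℤ)
    (H : ∀ (x : V n) (i : Fin n), g (x + Pi.single i 1) = g x + c i) :
    ∀ x : V n, g x = g 0 + ∑ i, x i * c i := by
  have H' : ∀ (x : V n) (i : Fin n) (k : ℤ), g (x + Pi.single i k) = g x + k * c i := by
    intro x i k
    induction k using Int.induction_on with
    | zero => simp
    | succ k ih =>
        have e : (x + Pi.single i (k : ℤ)) + Pi.single i 1 = x + Pi.single i ((k : ℤ) + 1) := by
          rw [add_assoc, ← Pi.single_add]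
        have := H (x + Pi.single i (k : ℤ)) i
        rw [e, ih] at this
        rw [this]; push_cast; ring
    | pred k ih =>
        have e : (x + Pi.single i (-(k : ℤ) - 1)) + Pi.single i 1 = x + Pi.single i (-(k : ℤ)) := by
          rw [add_assoc, ← Pi.single_add]
          norm_num
        have h2 := H (x + Pi.single i (-(k : ℤ) - 1)) i
        rw [e, ih] at h2
        linarith
  have Hs : ∀ (s : Finset (Fin n)) (x : V n), (∀ i ∉ s, x i = 0) →
      g x = g 0 + ∑ i ∈ s, x i * c i := by
    intro s
    induction s using Finset.induction_on with
    | empty =>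
        intro x hx
        have : x = 0 := funext fun i => hx i (by simp)
        simp [this]
    | @insert a s ha ih =>
        intro x hx
        set x' : V n := Function.update x a 0 with hx'def
        have hxeq : x = x' + Pi.single a (x a) := by
          funext j
          by_cases hj : j = a
          · subst hj; simp [hx'def]
          · simp [hx'def, Function.update_of_ne hj, Pi.single_eq_of_ne hj]
        have hx'0 : ∀ i ∉ s, x' i = 0 := by
          intro i hi
          by_cases hia : i = a
          · subst hia; simp [hx'def]
          · rw [hx'def, Function.update_of_ne hia]
            exact hx i (by simp [hia, hi])
        have hsum : ∑ i ∈ s, x' i * c i = ∑ i ∈ s, x i * c i := by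
          refine Finset.sum_congr rfl fun i hi => ?_
          have hia : i ≠ a := fun h => ha (h ▸ hi)
          rw [hx'def, Function.update_of_ne hia]
        have h1 : g x = g x' + x a * c a := by
          conv_lhs => rw [hxeq]
          exact H' x' a (x a)
        rw [h1, ih x' hx'0, hsum, Finset.sum_insert ha]
        ring
  intro x
  have := Hs Finset.univ x (by simp)
  simpa using this

end MyAux

/-- values of the height function of an `L₁`-periodic cut of type `γ`
on `L₁`: `h_C(y) = ∑ yᵢ (1 - (n+1)/m · γᵢ)`. -/
theorem stmt_8 (n m : ℕ) (hn : 1 ≤ n) (hm : 0 < m)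
    (L1 : AddSubgroup (V n)) (hidx : L1.index = m)
    (C : Set (Arrow n)) (hC : IsCut n C) (hper : IsPeriodic n L1 C)
    (h : V n → ℤ) (hh : IsHeight n h) (hch : cutOf n h = C) :
    ∀ y ∈ L1, (h y : ℚ) =
      ∑ i : Fin n, (y i : ℚ) *
        (1 - ((n : ℚ) + 1) / m * (typeCount n L1 C i.castSucc : ℚ)) := by
  classical
  -- membership / step formula
  have hmem : ∀ (x : V n) (i : Fin (n+1)), (x, i) ∈ C ↔ h (x + alphav n i) = h x - n := by
    intro x i; rw [← hch]; rfl
  have hstep : ∀ (x : V n) (i : Fin (n+1)),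
      h (x + alphav n i) = h x + (if (x, i) ∈ C then -(n : ℤ) else 1) := by
    intro x i
    by_cases hc : (x, i) ∈ C
    · rw [if_pos hc, (hmem x i).1 hc]; ring
    · rw [if_neg hc]
      rcases hh.2 x i with h1 | h2
      · exact h1
      · exact absurd ((hmem x i).2 h2) hc
  -- the finite quotient
  have hQcard : Nat.card (V n ⧸ L1) = m := by rw [← AddSubgroup.index_eq_card, hidx]
  have hfinQ : Finite (V n ⧸ L1) := Nat.finite_of_card_ne_zero (by rw [hQcard]; omega)
  have : Fintype (V n ⧸ L1) := Fintype.ofFinite _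
  have hcardQ : Fintype.card (V n ⧸ L1) = m := by rw [← Nat.card_eq_fintype_card, hQcard]
  -- the indicator function on the quotient
  set S : Fin (n+1) → Set (V n ⧸ L1) :=
    fun i => (QuotientAddGroup.mk (s := L1)) '' {x : V n | (x, i) ∈ C} with hSdef
  set D : Fin (n+1) → (V n ⧸ L1) → ℤ :=
    fun i q => if q ∈ S i then -(n : ℤ) else 1 with hDdef
  have hSiff : ∀ (x : V n) (i : Fin (n+1)),
      QuotientAddGroup.mk (s := L1) x ∈ S i ↔ (x, i) ∈ C := by
    intro x i
    constructor
    · rintro ⟨x', hx', he⟩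
      have hy : -x' + x ∈ L1 := (QuotientAddGroup.eq (s := L1)).1 he
      have := (hper (x', i) (-x' + x) hy).1 hx'
      simpa using this
    · intro hc; exact ⟨x, hc, rfl⟩
  have hD : ∀ (x : V n) (i : Fin (n+1)),
      (if (x, i) ∈ C then -(n : ℤ) else 1) = D i (QuotientAddGroup.mk (s := L1) x) := by
    intro x i
    simp only [hDdef]
    by_cases hc : (x, i) ∈ C
    · rw [if_pos hc, if_pos ((hSiff x i).2 hc)]
    · rw [if_neg hc, if_neg (fun hs => hc ((hSiff x i).1 hs))]
  -- sum of the indicator over the quotient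
  have hsumD : ∀ i : Fin (n+1),
      ∑ q : V n ⧸ L1, D i q = (m : ℤ) - ((n : ℤ) + 1) * (typeCount n L1 C i : ℤ) := by
    intro i
    have hγ : (typeCount n L1 C i : ℤ) = ((S i).toFinset.card : ℤ) := by
      rw [typeCount, Nat.card_eq_fintype_card, Set.toFinset_card]
    have hrw : ∀ q : V n ⧸ L1, D i q = 1 - ((n : ℤ) + 1) * (if q ∈ S i then 1 else 0) := by
      intro q; rw [hDdef]; by_cases hq : q ∈ S i <;> simp [hq] <;> ring
    rw [Finset.sum_congr rfl fun q _ => hrw q, Finset.sum_sub_distrib, ← Finset.mul_sum]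
    have hind : ∑ q : V n ⧸ L1, (if q ∈ S i then (1 : ℤ) else 0) = ((S i).toFinset.card : ℤ) := by
      have hfe : (Finset.univ.filter (fun q : V n ⧸ L1 => q ∈ S i)).card
          = (S i).toFinset.card := by
        congr 1
        ext q
        simp
      rw [Finset.sum_boole, hfe]
    rw [hind, hγ]
    simp [hcardQ]
  -- equivariance of h
  have hequiv : ∀ y ∈ L1, ∀ x : V n, h (x + y) = h x + h y := by
    intro y hy
    have key := my_coord_lin n (fun x => h (x + y) - h x) 0 ?_
    · intro x
      have hx := key x
      simp only [Pi.zero_apply, mul_zero, Finset.sum_const_zero, add_zero, zero_add] at hx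
      rw [hh.1, sub_zero] at hx
      linarith
    · intro x i
      have e1 : (x + Pi.single i 1) + y = (x + y) + Pi.single i 1 := by
        rw [add_assoc, add_comm (Pi.single i 1) y, ← add_assoc]
      have hper' : ((x + y, i.castSucc) ∈ C) ↔ ((x, i.castSucc) ∈ C) :=
        ((hper (x, i.castSucc) y hy)).symm
      simp only [Pi.zero_apply, add_zero]
      rw [e1, ← my_alphav_castSucc n i, hstep (x + y) i.castSucc, hstep x i.castSucc]
      rw [if_congr hper' rfl rfl]
      ring
  -- the averaged function F
  set F : V n → ℤ :=
    fun x => ∑ q : V n ⧸ L1, (h (Quotient.out q + x) - h (Quotient.out q)) with hFdef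
  have hF0 : F 0 = 0 := by simp [hFdef]
  have hFstep : ∀ (x : V n) (i : Fin (n+1)),
      F (x + alphav n i) = F x + ((m : ℤ) - ((n : ℤ) + 1) * (typeCount n L1 C i : ℤ)) := by
    intro x i
    have hterm : ∀ q : V n ⧸ L1,
        h (Quotient.out q + (x + alphav n i)) - h (Quotient.out q)
          = (h (Quotient.out q + x) - h (Quotient.out q))
            + D i (q + QuotientAddGroup.mk (s := L1) x) := by
      intro q
      have e : Quotient.out q + (x + alphav n i) = (Quotient.out q + x) + alphav n i := by
        rw [add_assoc]
      have hmk : QuotientAddGroup.mk (s := L1) (Quotient.out q + x)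
          = q + QuotientAddGroup.mk (s := L1) x := by
        have h1 : QuotientAddGroup.mk (s := L1) (Quotient.out q + x)
            = QuotientAddGroup.mk (s := L1) (Quotient.out q)
              + QuotientAddGroup.mk (s := L1) x := rfl
        rw [h1, QuotientAddGroup.out_eq']
      rw [e, hstep (Quotient.out q + x) i, hD, hmk]
      ring
    rw [hFdef]
    simp only []
    rw [Finset.sum_congr rfl fun q _ => hterm q, Finset.sum_add_distrib]
    congr 1
    rw [← hsumD i]
    exact Fintype.sum_equiv (Equiv.addRight (QuotientAddGroup.mk (s := L1) x)) _ _
      (fun q => rfl)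
  -- F is linear with known slopes
  have hFlin : ∀ x : V n, F x =
      ∑ i : Fin n, x i * ((m : ℤ) - ((n : ℤ) + 1) * (typeCount n L1 C i.castSucc : ℤ)) := by
    intro x
    have := my_coord_lin n F
      (fun i => (m : ℤ) - ((n : ℤ) + 1) * (typeCount n L1 C i.castSucc : ℤ))
      (fun x i => by rw [← my_alphav_castSucc n i]; exact hFstep x i.castSucc) x
    rwa [hF0, zero_add] at this
  -- conclusion
  intro y hy
  have hFy : F y = (m : ℤ) * h y := by
    rw [hFdef]
    simp only []
    have : ∀ q : V n ⧸ L1, h (Quotient.out q + y) - h (Quotient.out q) = h y := by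
      intro q; rw [hequiv y hy]; ring
    rw [Finset.sum_congr rfl fun q _ => this q, Finset.sum_const, Finset.card_univ,
      hcardQ, nsmul_eq_mul]
  have key : (m : ℤ) * h y =
      ∑ i : Fin n, y i * ((m : ℤ) - ((n : ℤ) + 1) * (typeCount n L1 C i.castSucc : ℤ)) := by
    rw [← hFy, hFlin]
  have hmQ : (m : ℚ) ≠ 0 := by exact_mod_cast hm.ne'
  have keyQ : (m : ℚ) * (h y : ℚ) =
      ∑ i : Fin n, (y i : ℚ) *
        ((m : ℚ) - ((n : ℚ) + 1) * (typeCount n L1 C i.castSucc : ℚ)) := by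
    exact_mod_cast key
  have hterm : ∀ i : Fin n,
      (y i : ℚ) * (1 - ((n : ℚ) + 1) / m * (typeCount n L1 C i.castSucc : ℚ))
        = (y i : ℚ) * ((m : ℚ) - ((n : ℚ) + 1) * (typeCount n L1 C i.castSucc : ℚ)) / m := by
    intro i; field_simp
  rw [Finset.sum_congr rfl fun i _ => hterm i, ← Finset.sum_div, ← keyQ,
    mul_div_cancel_left₀ _ hmQ]
end

section
/- Let \(m \geq 1\) and \(e_1, \ldots, e_{n+1} \in \{0, \ldots, m-1\}\) with \(\sum_{i=1}^{n+1} e_i = m\). On the quiver with vertex set \(\mathbb{Z}/m\mathbb{Z}\) (identified with \(\{0, \ldots, m-1\}\)) and arrows \(j \to (j + e_i) \bmod m\) of type \(i\), the set \(C = \{j \to (j+e_i) \bmod m \mid j > (j+e_i) \bmod m\}\) of "decreasing" arrows is a cut: every elementary cycle (a directed cycle using exactly one arrow of each of the \(n+1\) types) contains exactly one arrow of \(C\). -/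
/-- Arrows of the path through the cyclic quiver on `{0, …, m-1}` starting at `j`
with list of types `l`; the arrow of type `i` at `j` goes to `(j + e i) % m`. -/
def cpath (n m : ℕ) (e : Fin (n + 1) → ℕ) : ℕ → List (Fin (n + 1)) → List (ℕ × Fin (n + 1))
  | _, [] => []
  | j, i :: l => (j, i) :: cpath n m e ((j + e i) % m) l

lemma cpath_countP (n m : ℕ) (hm : 1 ≤ m) (e : Fin (n + 1) → ℕ)
    (he : ∀ i, e i < m) (l : List (Fin (n + 1))) :
    ∀ j, j < m →
      (cpath n m e j l).countP (fun a => (a.1 + e a.2) % m < a.1)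
        = (j + (l.map e).sum) / m := by
  induction l with
  | nil => intro j hj; simp [cpath, Nat.div_eq_of_lt hj]
  | cons i l ih =>
    intro j hj
    rw [cpath, List.countP_cons, ih _ (Nat.mod_lt _ hm)]
    have hlt : j + e i < 2 * m := by have := he i; omega
    by_cases h : j + e i < m
    · have hmod : (j + e i) % m = j + e i := Nat.mod_eq_of_lt h
      simp only [hmod]
      have : ¬ (j + e i < j) := by omega
      simp [this, add_assoc]
    · have hei := he i
      have hmod : (j + e i) % m = j + e i - m := by
        rw [Nat.mod_eq_sub_mod (by omega), Nat.mod_eq_of_lt (by omega)]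
      have hlt2 : j + e i - m < j := by omega
      simp only [hmod, hlt2, if_pos, decide_eq_true_eq, if_true]
      rw [List.map_cons, List.sum_cons]
      have h2 : j + (e i + (l.map e).sum) = (j + e i - m + (l.map e).sum) + m := by omega
      rw [h2, Nat.add_div_right _ hm]

/-- the set of decreasing arrows is a cut on the McKay quiver of the
cyclic group generated by `1/m (e₁, …, e_{n+1})`: every elementary cycle contains
exactly one decreasing arrow. -/
theorem stmt_12 (n m : ℕ) (hm : 1 ≤ m) (e : Fin (n + 1) → ℕ)
    (he : ∀ i, e i < m) (hsum : ∑ i, e i = m)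
    (j : ℕ) (hj : j < m) (l : List (Fin (n + 1)))
    (hlen : l.length = n + 1) (hnd : l.Nodup) :
    (cpath n m e j l).countP (fun a => (a.1 + e a.2) % m < a.1) = 1 := by
  have htf : l.toFinset = Finset.univ := by
    apply Finset.eq_univ_of_card
    rw [List.toFinset_card_of_nodup hnd, hlen, Fintype.card_fin]
  have hs : (l.map e).sum = m := by
    rw [← hsum, ← htf, List.sum_toFinset _ hnd]
  rw [cpath_countP n m hm e he l j hj, hs]
  rw [Nat.add_div_right _ hm, Nat.div_eq_of_lt hj]
end
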